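/- There exists a constant C > 0 depending only on Ω such that: for every classical solution (u, p, h) of the 2D Navier–Stokes system on Ω×(0,T) with data (u₀, L) (with u₀ smooth, div u₀ = 0 in Ω, u₀·n = 0 on ∂Ω, ω₀ := curl u₀), the space-independent boundary vorticity satisfies (∫₀ᵀ h(t)² dt)^{1/2} ≤ C max{√T, 1} ‖ω₀‖_{L²(Ω)}. -/

import Mathlib

noncomputable section
open MeasureTheory Real

/-- Points of the plane `ℝ²`. -/
abbrev Pt : Type := EuclideanSpace ℝ (Fin 2)

/-- Spatial partial derivative `∂ᵢ f` of a scalar field. -/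
def pd (i : Fin 2) (f : Pt → ℝ) (x : Pt) : ℝ :=
  fderiv ℝ f x (EuclideanSpace.single i 1)

/-- Scalar vorticity `curl v = ∂₁v₂ - ∂₂v₁` of a planar vector field. -/
def vort (v : Pt → Pt) (x : Pt) : ℝ :=
  pd 0 (fun y => v y 1) x - pd 1 (fun y => v y 0) x

/-- Divergence `div v = ∂₁v₁ + ∂₂v₂`. -/
def div2 (v : Pt → Pt) (x : Pt) : ℝ :=
  pd 0 (fun y => v y 0) x + pd 1 (fun y => v y 1) x

/-- Convection term `(v·∇)v`, component `i`. -/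
def conv (v : Pt → Pt) (x : Pt) (i : Fin 2) : ℝ :=
  ∑ j, v x j * pd j (fun y => v y i) x

/-- Squared pointwise norm `|v(x)|²` of a planar vector field. -/
def vecSq (v : Pt → Pt) (x : Pt) : ℝ := ∑ i, v x i ^ 2

/-- Squared pointwise norm `|∇f(x)|²` of the gradient of a scalar field. -/
def gradSq (f : Pt → ℝ) (x : Pt) : ℝ := ∑ i, pd i f x ^ 2

/-- Squared pointwise norm `|∇v(x)|²` of the gradient of a vector field. -/
def gradVecSq (v : Pt → Pt) (x : Pt) : ℝ :=
  ∑ i, ∑ j, pd j (fun y => v y i) x ^ 2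

/-- Squared pointwise norm `|∇²v(x)|²` of the Hessian of a vector field. -/
def hessVecSq (v : Pt → Pt) (x : Pt) : ℝ :=
  ∑ i, ∑ j, ∑ k, pd k (fun y => pd j (fun z => v z i) y) x ^ 2

/-- `L²(Ω)` norm of a scalar field. -/
def L2 (Ω : Set Pt) (f : Pt → ℝ) : ℝ := (∫ x in Ω, f x ^ 2) ^ (1/2 : ℝ)

/-- `L⁴(Ω)` norm of a scalar field. -/
def L4 (Ω : Set Pt) (f : Pt → ℝ) : ℝ := (∫ x in Ω, f x ^ 4) ^ (1/4 : ℝ)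

/-- `H¹(Ω)` norm of a vector field:  `(∫_Ω (|v|² + |∇v|²))^{1/2}`. -/
def H1vec (Ω : Set Pt) (v : Pt → Pt) : ℝ :=
  (∫ x in Ω, (vecSq v x + gradVecSq v x)) ^ (1/2 : ℝ)

/-- Squared `H²(Ω)` norm of a vector field: `∫_Ω (|v|² + |∇v|² + |∇²v|²)`. -/
def H2vecSq (Ω : Set Pt) (v : Pt → Pt) : ℝ :=
  ∫ x in Ω, (vecSq v x + gradVecSq v x + hessVecSq v x)

/-- `H¹(Ω)` norm of a scalar field: `(∫_Ω (f² + |∇f|²))^{1/2}`. -/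
def H1scalar (Ω : Set Pt) (f : Pt → ℝ) : ℝ :=
  (∫ x in Ω, (f x ^ 2 + gradSq f x)) ^ (1/2 : ℝ)

/-- A bounded, simply connected planar domain with smooth boundary, encoded by its
outward unit normal `n` and boundary surface measure `σ` satisfying the divergence
theorem (Gauss–Green formula) for smooth vector fields. -/
structure SmoothDomain2 where
  Ω : Set Pt
  n : Pt → Pt
  σ : Measure Pt
  isOpen : IsOpen Ω
  bounded : Bornology.IsBounded Ω
  nonempty : Ω.Nonempty
  simplyConnected : SimplyConnectedSpace Ω
  divergence_thm : ∀ F : Pt → Pt, ContDiff ℝ (⊤ : ℕ∞) F →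
    (∫ x in Ω, div2 F x) = ∫ x in frontier Ω, (∑ j, F x j * n x j) ∂σ

/-- `(u, p, h)` is a classical solution of the 2D Navier–Stokes system on `Ω × (0,T)`
with data `(u₀, L)`: all functions are smooth (up to the boundary, being globally
smooth), the momentum equation and incompressibility hold in `Ω × (0,T)`, the slip
and vorticity boundary conditions hold on `∂Ω × (0,T)`, `u(·,0) = u₀`, and the
global vorticity invariant constraint `(1/|Ω|)∫_Ω ω dx = L` holds on `(0,T)`. -/
structure IsNSSol (D : SmoothDomain2) (T : ℝ) (u₀ : Pt → Pt) (L : ℝ)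
    (u : ℝ → Pt → Pt) (p : ℝ → Pt → ℝ) (h : ℝ → ℝ) : Prop where
  smooth_u : ContDiff ℝ (⊤ : ℕ∞) (fun q : ℝ × Pt => u q.1 q.2)
  smooth_p : ContDiff ℝ (⊤ : ℕ∞) (fun q : ℝ × Pt => p q.1 q.2)
  smooth_h : ContDiff ℝ (⊤ : ℕ∞) h
  momentum : ∀ t ∈ Set.Ioo (0:ℝ) T, ∀ x ∈ D.Ω, ∀ i : Fin 2,
    deriv (fun s => u s x i) t + conv (u t) x i + pd i (p t) x
      - (∑ j, pd j (fun y => pd j (fun z => u t z i) y) x) = 0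
  divFree : ∀ t ∈ Set.Ioo (0:ℝ) T, ∀ x ∈ D.Ω, div2 (u t) x = 0
  slip : ∀ t ∈ Set.Ioo (0:ℝ) T, ∀ x ∈ frontier D.Ω,
    (∑ j, u t x j * D.n x j) = 0
  vortBC : ∀ t ∈ Set.Ioo (0:ℝ) T, ∀ x ∈ frontier D.Ω, vort (u t) x = h t
  init : ∀ x ∈ D.Ω, u 0 x = u₀ x
  vortAvg : ∀ t ∈ Set.Ioo (0:ℝ) T,
    (1 / (volume D.Ω).toReal) * (∫ x in D.Ω, vort (u t) x) = L
-- evaluation of parametric CLM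
lemma fderiv_clm_applied {E : Type*} [NormedAddCommGroup E] [NormedSpace ℝ E]
    {A : E → E →L[ℝ] ℝ} {x v w : E} (hA : DifferentiableAt ℝ A x) :
    fderiv ℝ (fun y => A y v) x w = fderiv ℝ A x w v := by
  have h : (fun y => A y v) = (fun φ : E →L[ℝ] ℝ => φ v) ∘ A := rfl
  rw [h]
  have h2 : HasFDerivAt ((fun φ : E →L[ℝ] ℝ => φ v) ∘ A)
      ((ContinuousLinearMap.apply ℝ ℝ v).comp (fderiv ℝ A x)) x :=
    ((ContinuousLinearMap.apply ℝ ℝ v).hasFDerivAt).comp x hA.hasFDerivAt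
  rw [h2.fderiv]; rfl

lemma top_add_one : (((⊤ : ℕ∞) : WithTop ℕ∞) + 1) = ((⊤ : ℕ∞) : WithTop ℕ∞) := by simp

lemma contDiff_fderiv_apply {E : Type*} [NormedAddCommGroup E] [NormedSpace ℝ E]
    {G : E → ℝ} (hG : ContDiff ℝ (⊤ : ℕ∞) G) (v : E) :
    ContDiff ℝ (⊤ : ℕ∞) (fun q => fderiv ℝ G q v) :=
  (hG.fderiv_right (le_of_eq top_add_one)).clm_apply contDiff_const

lemma symm2 {E : Type*} [NormedAddCommGroup E] [NormedSpace ℝ E]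
    {G : E → ℝ} (hG : ContDiff ℝ (⊤ : ℕ∞) G) (x v w : E) :
    fderiv ℝ (fun y => fderiv ℝ G y v) x w = fderiv ℝ (fun y => fderiv ℝ G y w) x v := by
  have hd : DifferentiableAt ℝ (fderiv ℝ G) x :=
    ((hG.fderiv_right (le_of_eq top_add_one)).differentiable (by simp)).differentiableAt
  rw [fderiv_clm_applied hd, fderiv_clm_applied hd]
  exact (hG.contDiffAt.isSymmSndFDerivAt (by rw [minSmoothness_of_isRCLikeNormedField]; exact WithTop.coe_le_coe.2 le_top)) w v

-- slices of a joint function ℝ × Pt → ℝ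
lemma hasDerivAt_sliceT {G : ℝ × Pt → ℝ} (hG : DifferentiableAt ℝ G (t, x)) :
    HasDerivAt (fun s => G (s, x)) (fderiv ℝ G (t, x) (1, 0)) t := by
  have h1 : HasDerivAt (fun s : ℝ => (s, x)) ((1:ℝ), (0:Pt)) t :=
    (hasDerivAt_id t).prodMk (hasDerivAt_const t x)
  exact hG.hasFDerivAt.comp_hasDerivAt t h1

lemma deriv_sliceT {G : ℝ × Pt → ℝ} (hG : DifferentiableAt ℝ G (t, x)) :
    deriv (fun s => G (s, x)) t = fderiv ℝ G (t, x) (1, 0) :=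
  (hasDerivAt_sliceT hG).deriv

lemma pd_sliceX {G : ℝ × Pt → ℝ} {t : ℝ} {x : Pt} (hG : DifferentiableAt ℝ G (t, x)) (i : Fin 2) :
    pd i (fun y => G (t, y)) x = fderiv ℝ G (t, x) (0, EuclideanSpace.single i 1) := by
  have h1 : HasFDerivAt (fun y : Pt => (t, y))
      (((0 : Pt →L[ℝ] ℝ)).prod (ContinuousLinearMap.id ℝ Pt)) x :=
    (hasFDerivAt_const t x).prodMk (hasFDerivAt_id x)
  have h2 := (hG.hasFDerivAt.comp x h1).fderiv
  rw [pd, show (fun y : Pt => G (t, y)) = G ∘ (fun y : Pt => (t, y)) from rfl, h2]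
  simp

lemma contDiff_sliceX {G : ℝ × Pt → ℝ} (hG : ContDiff ℝ (⊤ : ℕ∞) G) (t : ℝ) :
    ContDiff ℝ (⊤ : ℕ∞) (fun y : Pt => G (t, y)) :=
  hG.comp (contDiff_const.prodMk contDiff_id)

-- pd API
lemma pd_congr_nhds {f g : Pt → ℝ} {x : Pt} (h : f =ᶠ[nhds x] g) (i : Fin 2) :
    pd i f x = pd i g x := by simp [pd, h.fderiv_eq]

lemma pd_const (c : ℝ) (i : Fin 2) (x : Pt) : pd i (fun _ => c) x = 0 := by
  simp [pd]

lemma pd_add {f g : Pt → ℝ} {x : Pt} (hf : DifferentiableAt ℝ f x)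
    (hg : DifferentiableAt ℝ g x) (i : Fin 2) :
    pd i (fun y => f y + g y) x = pd i f x + pd i g x := by
  simp [pd, fderiv_fun_add hf hg]

lemma pd_sub {f g : Pt → ℝ} {x : Pt} (hf : DifferentiableAt ℝ f x)
    (hg : DifferentiableAt ℝ g x) (i : Fin 2) :
    pd i (fun y => f y - g y) x = pd i f x - pd i g x := by
  simp [pd, fderiv_fun_sub hf hg]

lemma pd_mul {f g : Pt → ℝ} {x : Pt} (hf : DifferentiableAt ℝ f x)
    (hg : DifferentiableAt ℝ g x) (i : Fin 2) :
    pd i (fun y => f y * g y) x = f x * pd i g x + g x * pd i f x := by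
  simp [pd, fderiv_fun_mul hf hg]

lemma pd_coord (i j : Fin 2) (x : Pt) :
    pd i (fun y : Pt => y j) x = if i = j then 1 else 0 := by
  have h : (fun y : Pt => y j) = fun y => (EuclideanSpace.proj (𝕜 := ℝ) j) y := rfl
  rw [pd, h, (EuclideanSpace.proj (𝕜 := ℝ) j).fderiv]
  simp [EuclideanSpace.single_apply]
  rcases eq_or_ne i j with h | h <;> simp [h, Ne.symm]

lemma contDiff_pd {f : Pt → ℝ} (hf : ContDiff ℝ (⊤ : ℕ∞) f) (i : Fin 2) :
    ContDiff ℝ (⊤ : ℕ∞) (pd i f) :=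
  contDiff_fderiv_apply hf _

lemma pd_eq_fderiv (f : Pt → ℝ) (i : Fin 2) :
    pd i f = fun y => fderiv ℝ f y (EuclideanSpace.single i 1) := rfl

lemma pd_comm {f : Pt → ℝ} (hf : ContDiff ℝ (⊤ : ℕ∞) f) (i j : Fin 2) (x : Pt) :
    pd i (pd j f) x = pd j (pd i f) x := by
  rw [pd_eq_fderiv f i, pd_eq_fderiv f j, pd, pd]
  exact symm2 hf x _ _

lemma integrableOn_of_continuous {Ω : Set Pt} (hb : Bornology.IsBounded Ω)
    {f : Pt → ℝ} (hf : Continuous f) : IntegrableOn f Ω volume := by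
  have hK : IsCompact (closure Ω) := (Metric.isCompact_of_isClosed_isBounded isClosed_closure hb.closure)
  exact (hf.continuousOn.integrableOn_compact hK).mono_set subset_closure

lemma param_hasDerivAt {Ω : Set Pt} (hmeas : MeasurableSet Ω) (hb : Bornology.IsBounded Ω)
    {G : ℝ × Pt → ℝ} (hG : ContDiff ℝ (⊤ : ℕ∞) G) (t₀ : ℝ) :
    HasDerivAt (fun t => ∫ x in Ω, G (t, x))
      (∫ x in Ω, fderiv ℝ G (t₀, x) (1, 0)) t₀ := by
  have hGc : Continuous G := hG.continuous
  have hG' : Continuous (fun q : ℝ × Pt => fderiv ℝ G q (1, 0)) :=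
    (contDiff_fderiv_apply hG _).continuous
  have hGd : Differentiable ℝ G := hG.differentiable (by simp)
  set K : Set (ℝ × Pt) := Set.Icc (t₀ - 1) (t₀ + 1) ×ˢ closure Ω with hK
  have hKc : IsCompact K := isCompact_Icc.prod (Metric.isCompact_of_isClosed_isBounded isClosed_closure hb.closure)
  obtain ⟨M, hM⟩ := hKc.exists_bound_of_continuousOn hG'.continuousOn
  have key := hasDerivAt_integral_of_dominated_loc_of_deriv_le (μ := volume.restrict Ω)
      (F := fun t x => G (t, x)) (F' := fun t x => fderiv ℝ G (t, x) (1, 0))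
      (x₀ := t₀) (bound := fun _ => M) (s := Metric.ball t₀ 1) (Metric.ball_mem_nhds t₀ one_pos)
      (Filter.Eventually.of_forall fun t =>
        ((hGc.comp (continuous_const.prodMk continuous_id)).aestronglyMeasurable))
      ((integrableOn_of_continuous hb (hGc.comp (continuous_const.prodMk continuous_id))))
      ((hG'.comp (continuous_const.prodMk continuous_id)).aestronglyMeasurable)
      ?_ ?_ ?_
  · exact key.2
  · filter_upwards [ae_restrict_mem hmeas] with x hx t ht
    refine hM (t, x) ⟨?_, subset_closure hx⟩
    have := mem_ball_iff_norm.1 ht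
    rw [Real.norm_eq_abs, abs_sub_lt_iff] at this
    constructor <;> linarith [this.1, this.2]
  · exact integrableOn_const hb.measure_lt_top.ne
  · exact Filter.Eventually.of_forall fun x t _ => hasDerivAt_sliceT (hGd _)

lemma param_continuous {Ω : Set Pt} (hmeas : MeasurableSet Ω) (hb : Bornology.IsBounded Ω)
    {G : ℝ × Pt → ℝ} (hG : ContDiff ℝ (⊤ : ℕ∞) G) :
    Continuous (fun t => ∫ x in Ω, G (t, x)) := by
  refine continuous_iff_continuousAt.2 fun t => ?_
  exact (param_hasDerivAt hmeas hb hG t).continuousAt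

/-- baby Cauchy–Schwarz : `(∫ φ)² ≤ |Ω| ∫ φ²` -/
lemma sq_setIntegral_le {Ω : Set Pt} (hb : Bornology.IsBounded Ω)
    {φ : Pt → ℝ} (hφ : Continuous φ) :
    (∫ x in Ω, φ x) ^ 2 ≤ (volume Ω).toReal * ∫ x in Ω, φ x ^ 2 := by
  set A := ∫ x in Ω, |φ x| with hA
  set B := ∫ x in Ω, φ x ^ 2 with hB
  set V := (volume Ω).toReal with hV
  have hint : IntegrableOn φ Ω volume := integrableOn_of_continuous hb hφ
  have hint2 : IntegrableOn (fun x => φ x ^ 2) Ω volume :=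
    integrableOn_of_continuous hb (hφ.pow 2)
  have hBnn : (0:ℝ) ≤ B := integral_nonneg fun x => sq_nonneg _
  have hVnn : (0:ℝ) ≤ V := ENNReal.toReal_nonneg
  have hA0 : (0:ℝ) ≤ A := integral_nonneg fun x => abs_nonneg _
  have key : A ^ 2 ≤ V * B := by
    rcases eq_or_lt_of_le hA0 with hA0' | hApos
    · rw [← hA0']; simpa using mul_nonneg hVnn hBnn
    · have hVpos : (0:ℝ) < V := by
        rcases eq_or_lt_of_le hVnn with hV0 | h; swap
        · exact h
        · exfalso
          have hμ : volume Ω = 0 := by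
            rcases (ENNReal.toReal_eq_zero_iff _).1 hV0.symm with h | h
            · exact h
            · exact absurd h hb.measure_lt_top.ne
          have : volume.restrict Ω = 0 := Measure.restrict_eq_zero.2 hμ
          rw [hA, this] at hApos
          simp at hApos
      set ε := A / V with hε
      have hεpos : (0:ℝ) < ε := div_pos hApos hVpos
      have hpt : ∀ x : Pt, |φ x| ≤ φ x ^ 2 / (2 * ε) + ε / 2 := by
        intro x
        have h1 := sq_nonneg (|φ x| - ε)
        have h2 : |φ x| ^ 2 = φ x ^ 2 := sq_abs _
        rw [div_add_div _ _ (by positivity) (by norm_num), le_div_iff₀ (by positivity)]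
        nlinarith
      have hrint : IntegrableOn (fun x => φ x ^ 2 / (2 * ε) + ε / 2) Ω volume :=
        (hint2.div_const _).add (integrableOn_const hb.measure_lt_top.ne)
      have h1 : A ≤ ∫ x in Ω, (φ x ^ 2 / (2 * ε) + ε / 2) :=
        integral_mono hint.abs hrint fun x => hpt x
      have h2 : ∫ x in Ω, (φ x ^ 2 / (2 * ε) + ε / 2)
          = B / (2 * ε) + V * (ε / 2) := by
        rw [integral_add (hint2.div_const _) (integrableOn_const hb.measure_lt_top.ne),
          integral_div, setIntegral_const, smul_eq_mul]; rfl
      rw [h2, hε] at h1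
      have e3 : B / (2 * (A / V)) = B * V / (2 * A) := by
        rw [div_eq_div_iff (by positivity) (by positivity)]; field_simp
      have e4 : V * (A / V / 2) = A / 2 := by field_simp
      rw [e3, e4] at h1
      have h4 : A / 2 ≤ B * V / (2 * A) := by linarith
      rw [div_le_div_iff₀ (by norm_num) (by positivity)] at h4
      nlinarith
  have habs : |∫ x in Ω, φ x| ≤ A := by
    rw [hA]
    simpa [Real.norm_eq_abs] using
      norm_integral_le_integral_norm (μ := volume.restrict Ω) φ
  calc (∫ x in Ω, φ x) ^ 2 = |∫ x in Ω, φ x| ^ 2 := (sq_abs _).symm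
  _ ≤ A ^ 2 := by gcongr
  _ ≤ V * B := key


-- vector field construction
def mkF (a b : Pt → ℝ) : Pt → Pt :=
  fun x => a x • EuclideanSpace.single (0 : Fin 2) (1:ℝ)
    + b x • EuclideanSpace.single (1 : Fin 2) (1:ℝ)

lemma mkF_apply0 (a b : Pt → ℝ) (x : Pt) : mkF a b x 0 = a x := by
  simp [mkF, EuclideanSpace.single_apply]

lemma mkF_apply1 (a b : Pt → ℝ) (x : Pt) : mkF a b x 1 = b x := by
  simp [mkF, EuclideanSpace.single_apply]

lemma mkF_contDiff {a b : Pt → ℝ} (ha : ContDiff ℝ (⊤ : ℕ∞) a) (hb : ContDiff ℝ (⊤ : ℕ∞) b) :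
    ContDiff ℝ (⊤ : ℕ∞) (mkF a b) :=
  (ha.smul contDiff_const).add (hb.smul contDiff_const)

lemma div2_mkF (a b : Pt → ℝ) (x : Pt) :
    div2 (mkF a b) x = pd 0 a x + pd 1 b x := by
  have h0 : (fun y => mkF a b y 0) = a := funext fun y => mkF_apply0 a b y
  have h1 : (fun y => mkF a b y 1) = b := funext fun y => mkF_apply1 a b y
  rw [div2, h0, h1]

lemma bsum_mkF (a b : Pt → ℝ) (n : Pt → Pt) (x : Pt) :
    (∑ j, mkF a b x j * n x j) = a x * n x 0 + b x * n x 1 := by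
  rw [Fin.sum_univ_two, mkF_apply0, mkF_apply1]

-- joint functions built from a velocity field
def Uc (u : ℝ → Pt → Pt) (i : Fin 2) : ℝ × Pt → ℝ := fun q => u q.1 q.2 i
def exv (j : Fin 2) : ℝ × Pt := ((0:ℝ), EuclideanSpace.single j (1:ℝ))
def Wfun (u : ℝ → Pt → Pt) : ℝ × Pt → ℝ :=
  fun q => fderiv ℝ (Uc u 1) q (exv 0) - fderiv ℝ (Uc u 0) q (exv 1)
def Wgrad (u : ℝ → Pt → Pt) (j : Fin 2) : ℝ × Pt → ℝ :=
  fun q => fderiv ℝ (Wfun u) q (exv j)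
def Wtime (u : ℝ → Pt → Pt) : ℝ × Pt → ℝ :=
  fun q => fderiv ℝ (Wfun u) q ((1:ℝ), (0:Pt))

section conv
variable {u : ℝ → Pt → Pt} (hu : ContDiff ℝ (⊤ : ℕ∞) (fun q : ℝ × Pt => u q.1 q.2))
include hu

lemma Uc_contDiff (i : Fin 2) : ContDiff ℝ (⊤ : ℕ∞) (Uc u i) := contDiff_euclidean.1 hu i

lemma Wfun_contDiff : ContDiff ℝ (⊤ : ℕ∞) (Wfun u) :=
  (contDiff_fderiv_apply (Uc_contDiff hu 1) _).sub (contDiff_fderiv_apply (Uc_contDiff hu 0) _)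

lemma Wgrad_contDiff (j : Fin 2) : ContDiff ℝ (⊤ : ℕ∞) (Wgrad u j) :=
  contDiff_fderiv_apply (Wfun_contDiff hu) _

lemma Wtime_contDiff : ContDiff ℝ (⊤ : ℕ∞) (Wtime u) :=
  contDiff_fderiv_apply (Wfun_contDiff hu) _

lemma vort_eq (t : ℝ) (x : Pt) : vort (u t) x = Wfun u (t, x) := by
  have h1 : (fun y : Pt => u t y 1) = (fun y => Uc u 1 (t, y)) := rfl
  have h0 : (fun y : Pt => u t y 0) = (fun y => Uc u 0 (t, y)) := rfl
  rw [vort, h1, h0,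
    pd_sliceX (((Uc_contDiff hu 1).differentiable (by simp)).differentiableAt) 0,
    pd_sliceX (((Uc_contDiff hu 0).differentiable (by simp)).differentiableAt) 1]
  rfl

lemma vort_funeq (t : ℝ) : vort (u t) = fun x => Wfun u (t, x) :=
  funext fun x => vort_eq hu t x

lemma vort_contDiff (t : ℝ) : ContDiff ℝ (⊤ : ℕ∞) (vort (u t)) := by
  rw [vort_funeq hu t]; exact contDiff_sliceX (Wfun_contDiff hu) t

lemma pd_vort (t : ℝ) (x : Pt) (j : Fin 2) :
    pd j (vort (u t)) x = Wgrad u j (t, x) := by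
  rw [vort_funeq hu t, pd_sliceX (((Wfun_contDiff hu).differentiable (by simp)).differentiableAt) j]
  rfl

end conv

section veq
variable {u : ℝ → Pt → Pt} (hu : ContDiff ℝ (⊤ : ℕ∞) (fun q : ℝ × Pt => u q.1 q.2))
include hu

lemma Wtime_split (q : ℝ × Pt) :
    Wtime u q = fderiv ℝ (fun r => fderiv ℝ (Uc u 1) r (exv 0)) q ((1:ℝ), (0:Pt))
      - fderiv ℝ (fun r => fderiv ℝ (Uc u 0) r (exv 1)) q ((1:ℝ), (0:Pt)) := by
  have d1 : DifferentiableAt ℝ (fun r => fderiv ℝ (Uc u 1) r (exv 0)) q :=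
    ((contDiff_fderiv_apply (Uc_contDiff hu 1) _).differentiable (by simp)).differentiableAt
  have d0 : DifferentiableAt ℝ (fun r => fderiv ℝ (Uc u 0) r (exv 1)) q :=
    ((contDiff_fderiv_apply (Uc_contDiff hu 0) _).differentiable (by simp)).differentiableAt
  show fderiv ℝ (fun r => fderiv ℝ (Uc u 1) r (exv 0) - fderiv ℝ (Uc u 0) r (exv 1)) q
      ((1:ℝ), (0:Pt)) = _
  rw [fderiv_fun_sub d1 d0]
  rfl

lemma vorticity_eq {D : SmoothDomain2} {T : ℝ} {p : ℝ → Pt → ℝ}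
    (hp : ContDiff ℝ (⊤ : ℕ∞) (fun q : ℝ × Pt => p q.1 q.2))
    (hmom : ∀ t ∈ Set.Ioo (0:ℝ) T, ∀ x ∈ D.Ω, ∀ i : Fin 2,
      deriv (fun s => u s x i) t + conv (u t) x i + pd i (p t) x
        - (∑ j, pd j (fun y => pd j (fun z => u t z i) y) x) = 0)
    (hdiv : ∀ t ∈ Set.Ioo (0:ℝ) T, ∀ x ∈ D.Ω, div2 (u t) x = 0)
    {t : ℝ} (ht : t ∈ Set.Ioo (0:ℝ) T) {x : Pt} (hx : x ∈ D.Ω) :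
    Wtime u (t, x)
      + (u t x 0 * pd 0 (vort (u t)) x + u t x 1 * pd 1 (vort (u t)) x)
      = pd 0 (pd 0 (vort (u t))) x + pd 1 (pd 1 (vort (u t))) x := by
  have hgc : ∀ i : Fin 2, ContDiff ℝ (⊤ : ℕ∞) (fun y : Pt => u t y i) :=
    fun i => contDiff_sliceX (Uc_contDiff hu i) t
  have hd : ∀ {f : Pt → ℝ}, ContDiff ℝ (⊤ : ℕ∞) f → ∀ y : Pt, DifferentiableAt ℝ f y :=
    fun hf y => (hf.differentiable (by simp)).differentiableAt
  have hA : ∀ i : Fin 2, ContDiff ℝ (⊤ : ℕ∞) (fun y : Pt => fderiv ℝ (Uc u i) (t, y) ((1:ℝ), (0:Pt))) :=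
    fun i => contDiff_sliceX (contDiff_fderiv_apply (Uc_contDiff hu i) _) t
  have hpt : ContDiff ℝ (⊤ : ℕ∞) (p t) := contDiff_sliceX hp t
  -- expansion of momentum curl components
  have expand : ∀ i k : Fin 2,
      pd k (fun y => deriv (fun s => u s y i) t + conv (u t) y i + pd i (p t) y
        - (∑ j, pd j (fun z => pd j (fun z' => u t z' i) z) y)) x
      = fderiv ℝ (fun q => fderiv ℝ (Uc u i) q (exv k)) (t, x) ((1:ℝ), (0:Pt))
        + ((u t x 0 * pd k (pd 0 (fun z => u t z i)) x
            + pd 0 (fun z => u t z i) x * pd k (fun z => u t z 0) x)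
          + (u t x 1 * pd k (pd 1 (fun z => u t z i)) x
            + pd 1 (fun z => u t z i) x * pd k (fun z => u t z 1) x))
        + pd k (pd i (p t)) x
        - (pd k (pd 0 (pd 0 (fun z => u t z i))) x + pd k (pd 1 (pd 1 (fun z => u t z i))) x) := by
    intro i k
    have hrw : (fun y => deriv (fun s => u s y i) t + conv (u t) y i + pd i (p t) y
        - (∑ j, pd j (fun z => pd j (fun z' => u t z' i) z) y))
      = fun y => (fderiv ℝ (Uc u i) (t, y) ((1:ℝ), (0:Pt))
          + (u t y 0 * pd 0 (fun z => u t z i) y + u t y 1 * pd 1 (fun z => u t z i) y)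
          + pd i (p t) y)
        - (pd 0 (pd 0 (fun z => u t z i)) y + pd 1 (pd 1 (fun z => u t z i)) y) := by
      funext y
      rw [conv, Fin.sum_univ_two, Fin.sum_univ_two,
        show deriv (fun s => u s y i) t = fderiv ℝ (Uc u i) (t, y) ((1:ℝ), (0:Pt)) from
          deriv_sliceT (((Uc_contDiff hu i).differentiable (by simp)).differentiableAt)]
    rw [hrw]
    have dB1 : DifferentiableAt ℝ (fun y : Pt => u t y 0 * pd 0 (fun z => u t z i) y) x :=
      hd ((hgc 0).mul (contDiff_pd (hgc i) 0)) x
    have dB2 : DifferentiableAt ℝ (fun y : Pt => u t y 1 * pd 1 (fun z => u t z i) y) x :=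
      hd ((hgc 1).mul (contDiff_pd (hgc i) 1)) x
    have dB : DifferentiableAt ℝ (fun y : Pt =>
        u t y 0 * pd 0 (fun z => u t z i) y + u t y 1 * pd 1 (fun z => u t z i) y) x := dB1.add dB2
    have dAB : DifferentiableAt ℝ (fun y : Pt => fderiv ℝ (Uc u i) (t, y) ((1:ℝ), (0:Pt))
        + (u t y 0 * pd 0 (fun z => u t z i) y + u t y 1 * pd 1 (fun z => u t z i) y)) x :=
      (hd (hA i) x).add dB
    have dABC : DifferentiableAt ℝ (fun y : Pt => fderiv ℝ (Uc u i) (t, y) ((1:ℝ), (0:Pt))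
        + (u t y 0 * pd 0 (fun z => u t z i) y + u t y 1 * pd 1 (fun z => u t z i) y)
        + pd i (p t) y) x := dAB.add (hd (contDiff_pd hpt i) x)
    have dD : DifferentiableAt ℝ (fun y : Pt =>
        pd 0 (pd 0 (fun z => u t z i)) y + pd 1 (pd 1 (fun z => u t z i)) y) x :=
      (hd (contDiff_pd (contDiff_pd (hgc i) 0) 0) x).add (hd (contDiff_pd (contDiff_pd (hgc i) 1) 1) x)
    rw [pd_sub dABC dD, pd_add dAB (hd (contDiff_pd hpt i) x), pd_add (hd (hA i) x) dB,
      pd_add dB1 dB2, pd_mul (hd (hgc 0) x) (hd (contDiff_pd (hgc i) 0) x),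
      pd_mul (hd (hgc 1) x) (hd (contDiff_pd (hgc i) 1) x),
      pd_add (hd (contDiff_pd (contDiff_pd (hgc i) 0) 0) x) (hd (contDiff_pd (contDiff_pd (hgc i) 1) 1) x)]
    -- now convert the time-derivative slice term
    have hsl : pd k (fun y : Pt => fderiv ℝ (Uc u i) (t, y) ((1:ℝ), (0:Pt))) x
        = fderiv ℝ (fun q => fderiv ℝ (Uc u i) q (exv k)) (t, x) ((1:ℝ), (0:Pt)) := by
      rw [pd_sliceX (((contDiff_fderiv_apply (Uc_contDiff hu i) _).differentiable (by simp)).differentiableAt) k]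
      exact symm2 (Uc_contDiff hu i) (t, x) _ _
    rw [hsl]
  -- momentum curl equals zero
  have hpdM : ∀ i k : Fin 2,
      pd k (fun y => deriv (fun s => u s y i) t + conv (u t) y i + pd i (p t) y
        - (∑ j, pd j (fun z => pd j (fun z' => u t z' i) z) y)) x = 0 := by
    intro i k
    have he : (fun y => deriv (fun s => u s y i) t + conv (u t) y i + pd i (p t) y
        - (∑ j, pd j (fun z => pd j (fun z' => u t z' i) z) y)) =ᶠ[nhds x] (fun _ => (0:ℝ)) :=
      Filter.eventuallyEq_of_mem (D.isOpen.mem_nhds hx) (fun y hy => hmom t ht y hy i)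
    rw [pd_congr_nhds he, pd_const]
  have F1 := (expand 1 0).symm.trans (hpdM 1 0)
  have F0 := (expand 0 1).symm.trans (hpdM 0 1)
  -- unfold vorticity into components
  have hpv : ∀ (j : Fin 2) (y : Pt), pd j (vort (u t)) y
      = pd j (pd 0 (fun z => u t z 1)) y - pd j (pd 1 (fun z => u t z 0)) y := by
    intro j y
    have hv : vort (u t) = fun y => pd 0 (fun z => u t z 1) y - pd 1 (fun z => u t z 0) y := rfl
    rw [hv, pd_sub (hd (contDiff_pd (hgc 1) 0) y) (hd (contDiff_pd (hgc 0) 1) y)]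
  have hppv : ∀ j k : Fin 2, pd k (pd j (vort (u t))) x
      = pd k (pd j (pd 0 (fun z => u t z 1))) x - pd k (pd j (pd 1 (fun z => u t z 0))) x := by
    intro j k
    rw [show pd j (vort (u t)) = fun y => pd j (pd 0 (fun z => u t z 1)) y
        - pd j (pd 1 (fun z => u t z 0)) y from funext fun y => hpv j y,
      pd_sub (hd (contDiff_pd (contDiff_pd (hgc 1) 0) j) x) (hd (contDiff_pd (contDiff_pd (hgc 0) 1) j) x)]
  have hWt := Wtime_split hu (t, x)
  -- commutation facts
  have c1 : pd 0 (pd 1 (fun z : Pt => u t z 0)) x = pd 1 (pd 0 (fun z : Pt => u t z 0)) x :=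
    pd_comm (hgc 0) 0 1 x
  have c2 : pd 1 (pd 0 (fun z : Pt => u t z 1)) x = pd 0 (pd 1 (fun z : Pt => u t z 1)) x :=
    pd_comm (hgc 1) 1 0 x
  have cp : pd 0 (pd 1 (p t)) x = pd 1 (pd 0 (p t)) x := pd_comm hpt 0 1 x
  have ct1 : pd 0 (pd 1 (pd 1 (fun z : Pt => u t z 1))) x
      = pd 1 (pd 1 (pd 0 (fun z : Pt => u t z 1))) x := by
    rw [pd_comm (contDiff_pd (hgc 1) 1) 0 1 x,
      show pd 0 (pd 1 (fun z : Pt => u t z 1)) = pd 1 (pd 0 (fun z : Pt => u t z 1)) from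
        funext fun y => pd_comm (hgc 1) 0 1 y]
  have ct2 : pd 1 (pd 0 (pd 0 (fun z : Pt => u t z 0))) x
      = pd 0 (pd 0 (pd 1 (fun z : Pt => u t z 0))) x := by
    rw [pd_comm (contDiff_pd (hgc 0) 0) 1 0 x,
      show pd 1 (pd 0 (fun z : Pt => u t z 0)) = pd 0 (pd 1 (fun z : Pt => u t z 0)) from
        funext fun y => pd_comm (hgc 0) 1 0 y]
  -- divergence free
  have hdivu : pd 0 (fun z : Pt => u t z 0) x + pd 1 (fun z : Pt => u t z 1) x = 0 :=
    hdiv t ht x hx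
  have hprod : (pd 0 (fun z : Pt => u t z 1) x - pd 1 (fun z : Pt => u t z 0) x)
      * (pd 0 (fun z : Pt => u t z 0) x + pd 1 (fun z : Pt => u t z 1) x) = 0 := by
    rw [hdivu, mul_zero]
  rw [hWt, hpv 0 x, hpv 1 x, hppv 0 0, hppv 1 1]
  linear_combination F1 - F0 - hprod - (u t x 0) * c1 + (u t x 1) * c2 - cp + ct1 - ct2
end veq

lemma coord_contDiff (j : Fin 2) : ContDiff ℝ (⊤ : ℕ∞) (fun x : Pt => x j) :=
  (EuclideanSpace.proj (𝕜 := ℝ) j).contDiff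

section divthm
variable {D : SmoothDomain2} {T : ℝ} {u₀ : Pt → Pt} {L : ℝ} {u : ℝ → Pt → Pt}
  {p : ℝ → Pt → ℝ} {h : ℝ → ℝ} (sol : IsNSSol D T u₀ L u p h)
include sol

omit sol in
lemma area_id : ∫ x in frontier D.Ω, (∑ j, x j * D.n x j) ∂D.σ
    = 2 * (volume D.Ω).toReal := by
  have hdt := (D.divergence_thm (fun x => x) contDiff_id).symm
  have hdiv2 : ∀ y : Pt, div2 (fun x : Pt => x) y = 2 := by
    intro y; rw [div2]
    rw [show (fun y : Pt => (fun x : Pt => x) y 0) = fun y : Pt => y 0 from rfl,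
      show (fun y : Pt => (fun x : Pt => x) y 1) = fun y : Pt => y 1 from rfl,
      pd_coord, pd_coord]
    norm_num
  rw [hdt]
  simp only [hdiv2]
  rw [setIntegral_const, smul_eq_mul, mul_comm]; rfl

lemma h_formula {t : ℝ} (ht : t ∈ Set.Ioo (0:ℝ) T) :
    h t * (2 * (volume D.Ω).toReal)
      = ∫ x in D.Ω, (2 * vort (u t) x
          + (x 0 * pd 0 (vort (u t)) x + x 1 * pd 1 (vort (u t)) x)) := by
  have hu := sol.smooth_u
  have hw : ContDiff ℝ (⊤ : ℕ∞) (vort (u t)) := vort_contDiff hu t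
  have hd : ∀ {f : Pt → ℝ}, ContDiff ℝ (⊤ : ℕ∞) f → ∀ y : Pt, DifferentiableAt ℝ f y :=
    fun hf y => (hf.differentiable (by simp)).differentiableAt
  set F := mkF (fun x => vort (u t) x * x 0) (fun x => vort (u t) x * x 1) with hF
  have hFc : ContDiff ℝ (⊤ : ℕ∞) F :=
    mkF_contDiff (hw.mul (coord_contDiff 0)) (hw.mul (coord_contDiff 1))
  have hdt := D.divergence_thm F hFc
  have hdivF : ∀ y : Pt, div2 F y = 2 * vort (u t) y
      + (y 0 * pd 0 (vort (u t)) y + y 1 * pd 1 (vort (u t)) y) := by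
    intro y
    rw [hF, div2_mkF, pd_mul (hd hw y) (hd (coord_contDiff 0) y),
      pd_mul (hd hw y) (hd (coord_contDiff 1) y), pd_coord, pd_coord]
    simp only [if_true, reduceIte]
    ring
  have hbd : ∀ x ∈ frontier D.Ω,
      (∑ j, F x j * D.n x j) = h t * (∑ j, x j * D.n x j) := by
    intro x hx
    rw [hF, bsum_mkF, sol.vortBC t ht x hx, Fin.sum_univ_two]
    ring
  rw [setIntegral_congr_fun (isClosed_frontier.measurableSet) hbd, integral_const_mul,
    area_id (D := D)] at hdt
  rw [← hdt]
  exact setIntegral_congr_fun D.isOpen.measurableSet fun y _ => hdivF y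

lemma transport_zero {t : ℝ} (ht : t ∈ Set.Ioo (0:ℝ) T) :
    ∫ x in D.Ω, (u t x 0 * pd 0 (vort (u t)) x + u t x 1 * pd 1 (vort (u t)) x) = 0 := by
  have hu := sol.smooth_u
  have hw : ContDiff ℝ (⊤ : ℕ∞) (vort (u t)) := vort_contDiff hu t
  have hgc : ∀ i : Fin 2, ContDiff ℝ (⊤ : ℕ∞) (fun y : Pt => u t y i) :=
    fun i => contDiff_sliceX (Uc_contDiff hu i) t
  have hd : ∀ {f : Pt → ℝ}, ContDiff ℝ (⊤ : ℕ∞) f → ∀ y : Pt, DifferentiableAt ℝ f y :=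
    fun hf y => (hf.differentiable (by simp)).differentiableAt
  set F := mkF (fun x => vort (u t) x * u t x 0) (fun x => vort (u t) x * u t x 1) with hF
  have hFc : ContDiff ℝ (⊤ : ℕ∞) F := mkF_contDiff (hw.mul (hgc 0)) (hw.mul (hgc 1))
  have hdt := D.divergence_thm F hFc
  have hbd : ∀ x ∈ frontier D.Ω, (∑ j, F x j * D.n x j) = 0 := by
    intro x hx
    have hs := sol.slip t ht x hx
    rw [Fin.sum_univ_two] at hs
    rw [hF, bsum_mkF]
    linear_combination vort (u t) x * hs
  rw [setIntegral_congr_fun (isClosed_frontier.measurableSet) hbd] at hdt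
  simp only [integral_zero] at hdt
  rw [← hdt]
  refine setIntegral_congr_fun D.isOpen.measurableSet fun y hy => ?_
  have hdivu : pd 0 (fun z : Pt => u t z 0) y + pd 1 (fun z : Pt => u t z 1) y = 0 :=
    sol.divFree t ht y hy
  rw [hF, div2_mkF, pd_mul (hd hw y) (hd (hgc 0) y), pd_mul (hd hw y) (hd (hgc 1) y)]
  linear_combination (-(vort (u t) y)) * hdivu

lemma w_transport_zero {t : ℝ} (ht : t ∈ Set.Ioo (0:ℝ) T) :
    ∫ x in D.Ω, vort (u t) x
      * (u t x 0 * pd 0 (vort (u t)) x + u t x 1 * pd 1 (vort (u t)) x) = 0 := by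
  have hu := sol.smooth_u
  have hw : ContDiff ℝ (⊤ : ℕ∞) (vort (u t)) := vort_contDiff hu t
  have hgc : ∀ i : Fin 2, ContDiff ℝ (⊤ : ℕ∞) (fun y : Pt => u t y i) :=
    fun i => contDiff_sliceX (Uc_contDiff hu i) t
  have hd : ∀ {f : Pt → ℝ}, ContDiff ℝ (⊤ : ℕ∞) f → ∀ y : Pt, DifferentiableAt ℝ f y :=
    fun hf y => (hf.differentiable (by simp)).differentiableAt
  set F := mkF (fun x => vort (u t) x * vort (u t) x * u t x 0)
    (fun x => vort (u t) x * vort (u t) x * u t x 1) with hF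
  have hFc : ContDiff ℝ (⊤ : ℕ∞) F := mkF_contDiff ((hw.mul hw).mul (hgc 0)) ((hw.mul hw).mul (hgc 1))
  have hdt := D.divergence_thm F hFc
  have hbd : ∀ x ∈ frontier D.Ω, (∑ j, F x j * D.n x j) = 0 := by
    intro x hx
    have hs := sol.slip t ht x hx
    rw [Fin.sum_univ_two] at hs
    rw [hF, bsum_mkF]
    linear_combination (vort (u t) x * vort (u t) x) * hs
  rw [setIntegral_congr_fun (isClosed_frontier.measurableSet) hbd] at hdt
  simp only [integral_zero] at hdt
  have key : ∫ x in D.Ω, div2 F x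
      = ∫ x in D.Ω, 2 * (vort (u t) x
        * (u t x 0 * pd 0 (vort (u t)) x + u t x 1 * pd 1 (vort (u t)) x)) := by
    refine setIntegral_congr_fun D.isOpen.measurableSet fun y hy => ?_
    have hdivu : pd 0 (fun z : Pt => u t z 0) y + pd 1 (fun z : Pt => u t z 1) y = 0 :=
      sol.divFree t ht y hy
    rw [hF, div2_mkF, pd_mul (hd (hw.mul hw) y) (hd (hgc 0) y),
      pd_mul (hd (hw.mul hw) y) (hd (hgc 1) y),
      pd_mul (hd hw y) (hd hw y), pd_mul (hd hw y) (hd hw y)]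
    linear_combination (vort (u t) y * vort (u t) y) * hdivu
  rw [hdt] at key
  rw [integral_const_mul] at key
  linarith

lemma lap_boundary {t : ℝ} :
    ∫ x in frontier D.Ω,
        (pd 0 (vort (u t)) x * D.n x 0 + pd 1 (vort (u t)) x * D.n x 1) ∂D.σ
      = ∫ x in D.Ω, (pd 0 (pd 0 (vort (u t))) x + pd 1 (pd 1 (vort (u t))) x) := by
  have hu := sol.smooth_u
  have hw : ContDiff ℝ (⊤ : ℕ∞) (vort (u t)) := vort_contDiff hu t
  set F := mkF (pd 0 (vort (u t))) (pd 1 (vort (u t))) with hF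
  have hFc : ContDiff ℝ (⊤ : ℕ∞) F := mkF_contDiff (contDiff_pd hw 0) (contDiff_pd hw 1)
  have hdt := D.divergence_thm F hFc
  have hbd : ∀ x : Pt,
      (∑ j, F x j * D.n x j) = pd 0 (vort (u t)) x * D.n x 0 + pd 1 (vort (u t)) x * D.n x 1 := by
    intro x; rw [hF, bsum_mkF]
  have hdv : ∀ y : Pt, div2 F y = pd 0 (pd 0 (vort (u t))) y + pd 1 (pd 1 (vort (u t))) y := by
    intro y; rw [hF, div2_mkF]
  calc ∫ x in frontier D.Ω,
        (pd 0 (vort (u t)) x * D.n x 0 + pd 1 (vort (u t)) x * D.n x 1) ∂D.σ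
      = ∫ x in frontier D.Ω, (∑ j, F x j * D.n x j) ∂D.σ := by
        refine setIntegral_congr_fun (isClosed_frontier.measurableSet) fun x _ => ?_
        rw [hbd]
    _ = ∫ x in D.Ω, div2 F x := hdt.symm
    _ = _ := setIntegral_congr_fun D.isOpen.measurableSet fun y _ => hdv y

lemma energy_ibp {t : ℝ} (ht : t ∈ Set.Ioo (0:ℝ) T) :
    ∫ x in D.Ω, (vort (u t) x
        * (pd 0 (pd 0 (vort (u t))) x + pd 1 (pd 1 (vort (u t))) x)
      + ((pd 0 (vort (u t)) x) ^ 2 + (pd 1 (vort (u t)) x) ^ 2))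
    = h t * ∫ x in D.Ω, (pd 0 (pd 0 (vort (u t))) x + pd 1 (pd 1 (vort (u t))) x) := by
  have hu := sol.smooth_u
  have hw : ContDiff ℝ (⊤ : ℕ∞) (vort (u t)) := vort_contDiff hu t
  have hd : ∀ {f : Pt → ℝ}, ContDiff ℝ (⊤ : ℕ∞) f → ∀ y : Pt, DifferentiableAt ℝ f y :=
    fun hf y => (hf.differentiable (by simp)).differentiableAt
  set F := mkF (fun x => vort (u t) x * pd 0 (vort (u t)) x)
    (fun x => vort (u t) x * pd 1 (vort (u t)) x) with hF
  have hFc : ContDiff ℝ (⊤ : ℕ∞) F :=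
    mkF_contDiff (hw.mul (contDiff_pd hw 0)) (hw.mul (contDiff_pd hw 1))
  have hdt := D.divergence_thm F hFc
  have hbd : ∀ x ∈ frontier D.Ω, (∑ j, F x j * D.n x j)
      = h t * (pd 0 (vort (u t)) x * D.n x 0 + pd 1 (vort (u t)) x * D.n x 1) := by
    intro x hx
    rw [hF, bsum_mkF, sol.vortBC t ht x hx]
    ring
  rw [setIntegral_congr_fun (isClosed_frontier.measurableSet) hbd, integral_const_mul,
    lap_boundary sol] at hdt
  rw [← hdt]
  refine setIntegral_congr_fun D.isOpen.measurableSet fun y _ => ?_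
  rw [hF, div2_mkF, pd_mul (hd hw y) (hd (contDiff_pd hw 0) y),
    pd_mul (hd hw y) (hd (contDiff_pd hw 1) y)]
  ring
end divthm

def fE (D : SmoothDomain2) (u : ℝ → Pt → Pt) : ℝ → ℝ :=
  fun t => ∫ x in D.Ω, (Wfun u (t, x)) ^ 2
def gE (D : SmoothDomain2) (u : ℝ → Pt → Pt) : ℝ → ℝ :=
  fun t => ∫ x in D.Ω, ((Wgrad u 0 (t, x)) ^ 2 + (Wgrad u 1 (t, x)) ^ 2)
def avgE (D : SmoothDomain2) (u : ℝ → Pt → Pt) : ℝ → ℝ :=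
  fun t => ∫ x in D.Ω, Wfun u (t, x)

section timecalc
variable {D : SmoothDomain2} {u : ℝ → Pt → Pt}
  (hu : ContDiff ℝ (⊤ : ℕ∞) (fun q : ℝ × Pt => u q.1 q.2))
include hu

lemma fE_hasDeriv (t : ℝ) :
    HasDerivAt (fE D u) (∫ x in D.Ω, 2 * Wfun u (t, x) * Wtime u (t, x)) t := by
  have hWd : Differentiable ℝ (Wfun u) := (Wfun_contDiff hu).differentiable (by simp)
  have hsq : ∀ q : ℝ × Pt, fderiv ℝ (fun q => Wfun u q ^ 2) q ((1:ℝ), (0:Pt))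
      = 2 * Wfun u q * Wtime u q := by
    intro q
    have e : (fun q => Wfun u q ^ 2) = fun q => Wfun u q * Wfun u q := by
      funext q; ring
    rw [e, fderiv_fun_mul (hWd q) (hWd q)]
    simp only [ContinuousLinearMap.add_apply, ContinuousLinearMap.smul_apply, smul_eq_mul]
    rw [Wtime]
    ring
  have hp := param_hasDerivAt D.isOpen.measurableSet D.bounded
    ((Wfun_contDiff hu).pow 2) t
  have hp2 : HasDerivAt (fun t => ∫ x in D.Ω, Wfun u (t, x) ^ 2)
      (∫ x in D.Ω, 2 * Wfun u (t, x) * Wtime u (t, x)) t := by simpa only [hsq] using hp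
  exact hp2

lemma avgE_hasDeriv (t : ℝ) :
    HasDerivAt (avgE D u) (∫ x in D.Ω, Wtime u (t, x)) t := by
  have hp := param_hasDerivAt D.isOpen.measurableSet D.bounded (Wfun_contDiff hu) t
  exact hp

lemma fE_cont : Continuous (fE D u) :=
  param_continuous D.isOpen.measurableSet D.bounded ((Wfun_contDiff hu).pow 2)

lemma gE_cont : Continuous (gE D u) :=
  param_continuous D.isOpen.measurableSet D.bounded
    (((Wgrad_contDiff hu 0).pow 2).add ((Wgrad_contDiff hu 1).pow 2))

omit hu in
lemma gE_nonneg (t : ℝ) : 0 ≤ gE D u t :=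
  integral_nonneg fun x => by positivity

omit hu in
lemma fE_nonneg (t : ℝ) : 0 ≤ fE D u t :=
  integral_nonneg fun x => sq_nonneg _
end timecalc

section energy
variable {D : SmoothDomain2} {T : ℝ} {u₀ : Pt → Pt} {L : ℝ} {u : ℝ → Pt → Pt}
  {p : ℝ → Pt → ℝ} {h : ℝ → ℝ} (sol : IsNSSol D T u₀ L u p h)
include sol

lemma vol_pos : 0 < (volume D.Ω).toReal :=
  ENNReal.toReal_pos (D.isOpen.measure_pos volume D.nonempty).ne' D.bounded.measure_lt_top.ne

lemma avg_deriv_zero {t : ℝ} (ht : t ∈ Set.Ioo (0:ℝ) T) :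
    ∫ x in D.Ω, Wtime u (t, x) = 0 := by
  have hu := sol.smooth_u
  set vol := (volume D.Ω).toReal with hvol
  have hvolpos : 0 < vol := vol_pos sol
  have hconst : ∀ s ∈ Set.Ioo (0:ℝ) T, avgE D u s = L * vol := by
    intro s hs
    have hva := sol.vortAvg s hs
    have : ∫ x in D.Ω, vort (u s) x = avgE D u s := by
      rw [avgE]; exact setIntegral_congr_fun D.isOpen.measurableSet
        fun x _ => vort_eq hu s x
    rw [this] at hva
    rw [one_div, inv_mul_eq_iff_eq_mul₀ (vol_pos sol).ne'] at hva
    linarith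
  have hc : HasDerivAt (avgE D u) 0 t := by
    have hev : avgE D u =ᶠ[nhds t] (fun _ => L * vol) :=
      Filter.eventuallyEq_of_mem (isOpen_Ioo.mem_nhds ht) (fun s hs => hconst s hs)
    exact (hasDerivAt_const t (L * vol)).congr_of_eventuallyEq hev
  exact (avgE_hasDeriv hu t).unique hc

lemma lap_integral_zero {t : ℝ} (ht : t ∈ Set.Ioo (0:ℝ) T) :
    ∫ x in D.Ω, (pd 0 (pd 0 (vort (u t))) x + pd 1 (pd 1 (vort (u t))) x) = 0 := by
  have hu := sol.smooth_u
  have hw : ContDiff ℝ (⊤ : ℕ∞) (vort (u t)) := vort_contDiff hu t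
  have hgc : ∀ i : Fin 2, ContDiff ℝ (⊤ : ℕ∞) (fun y : Pt => u t y i) :=
    fun i => contDiff_sliceX (Uc_contDiff hu i) t
  have hlap : ∀ x ∈ D.Ω, pd 0 (pd 0 (vort (u t))) x + pd 1 (pd 1 (vort (u t))) x
      = Wtime u (t, x) + (u t x 0 * pd 0 (vort (u t)) x + u t x 1 * pd 1 (vort (u t)) x) :=
    fun x hx => (vorticity_eq hu sol.smooth_p sol.momentum sol.divFree ht hx).symm
  rw [setIntegral_congr_fun D.isOpen.measurableSet hlap]
  have hi1 : IntegrableOn (fun x => Wtime u (t, x)) D.Ω volume :=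
    integrableOn_of_continuous D.bounded
      (((Wtime_contDiff hu).continuous).comp (continuous_const.prodMk continuous_id))
  have hi2 : IntegrableOn
      (fun x => u t x 0 * pd 0 (vort (u t)) x + u t x 1 * pd 1 (vort (u t)) x) D.Ω volume :=
    integrableOn_of_continuous D.bounded
      ((((hgc 0).continuous).mul (contDiff_pd hw 0).continuous).add
        (((hgc 1).continuous).mul (contDiff_pd hw 1).continuous))
  rw [integral_add hi1 hi2, avg_deriv_zero sol ht, transport_zero sol ht, add_zero]

lemma energy_identity {t : ℝ} (ht : t ∈ Set.Ioo (0:ℝ) T) :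
    (∫ x in D.Ω, 2 * Wfun u (t, x) * Wtime u (t, x)) = -2 * gE D u t := by
  have hu := sol.smooth_u
  have hw : ContDiff ℝ (⊤ : ℕ∞) (vort (u t)) := vort_contDiff hu t
  have hgc : ∀ i : Fin 2, ContDiff ℝ (⊤ : ℕ∞) (fun y : Pt => u t y i) :=
    fun i => contDiff_sliceX (Uc_contDiff hu i) t
  -- rewrite the integrand on Ω using the vorticity equation
  have hpt : ∀ x ∈ D.Ω, 2 * Wfun u (t, x) * Wtime u (t, x)
      = 2 * (vort (u t) x * (pd 0 (pd 0 (vort (u t))) x + pd 1 (pd 1 (vort (u t))) x))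
        - 2 * (vort (u t) x
            * (u t x 0 * pd 0 (vort (u t)) x + u t x 1 * pd 1 (vort (u t)) x)) := by
    intro x hx
    have hveq := vorticity_eq hu sol.smooth_p sol.momentum sol.divFree ht hx
    rw [← vort_eq hu t x]
    linear_combination (2 * vort (u t) x) * hveq
  rw [setIntegral_congr_fun D.isOpen.measurableSet hpt]
  have hiwl : IntegrableOn (fun x => 2 * (vort (u t) x
      * (pd 0 (pd 0 (vort (u t))) x + pd 1 (pd 1 (vort (u t))) x))) D.Ω volume :=
    integrableOn_of_continuous D.bounded
      (continuous_const.mul (hw.continuous.mul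
        (((contDiff_pd (contDiff_pd hw 0) 0).continuous).add
          ((contDiff_pd (contDiff_pd hw 1) 1).continuous))))
  have hiwt : IntegrableOn (fun x => 2 * (vort (u t) x
      * (u t x 0 * pd 0 (vort (u t)) x + u t x 1 * pd 1 (vort (u t)) x))) D.Ω volume :=
    integrableOn_of_continuous D.bounded
      (continuous_const.mul (hw.continuous.mul
        ((((hgc 0).continuous).mul (contDiff_pd hw 0).continuous).add
          (((hgc 1).continuous).mul (contDiff_pd hw 1).continuous))))
  rw [integral_sub hiwl hiwt, integral_const_mul, integral_const_mul,
    w_transport_zero sol ht, mul_zero, sub_zero]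
  -- use integration by parts (energy_ibp) and lap_integral_zero
  have hibp := energy_ibp sol ht
  have hiwl2 : IntegrableOn (fun x => vort (u t) x
      * (pd 0 (pd 0 (vort (u t))) x + pd 1 (pd 1 (vort (u t))) x)) D.Ω volume :=
    integrableOn_of_continuous D.bounded
      (hw.continuous.mul
        (((contDiff_pd (contDiff_pd hw 0) 0).continuous).add
          ((contDiff_pd (contDiff_pd hw 1) 1).continuous)))
  have higrad : IntegrableOn (fun x => (pd 0 (vort (u t)) x) ^ 2
      + (pd 1 (vort (u t)) x) ^ 2) D.Ω volume :=
    integrableOn_of_continuous D.bounded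
      (((contDiff_pd hw 0).continuous.pow 2).add ((contDiff_pd hw 1).continuous.pow 2))
  rw [integral_add hiwl2 higrad, lap_integral_zero sol ht, mul_zero] at hibp
  have hgrad : (∫ x in D.Ω, ((pd 0 (vort (u t)) x) ^ 2 + (pd 1 (vort (u t)) x) ^ 2))
      = gE D u t := by
    rw [gE]
    exact setIntegral_congr_fun D.isOpen.measurableSet fun x _ => by
      rw [pd_vort hu t x 0, pd_vort hu t x 1]
  rw [hgrad] at hibp
  linarith
end energy

section ftc
variable {D : SmoothDomain2} {T : ℝ} {u₀ : Pt → Pt} {L : ℝ} {u : ℝ → Pt → Pt}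
  {p : ℝ → Pt → ℝ} {h : ℝ → ℝ} (sol : IsNSSol D T u₀ L u p h)
include sol

lemma ftc_fE {t : ℝ} (ht0 : 0 ≤ t) (htT : t ≤ T) :
    fE D u t - fE D u 0 = ∫ s in (0:ℝ)..t, (-2 * gE D u s) := by
  have hu := sol.smooth_u
  refine (intervalIntegral.integral_eq_sub_of_hasDeriv_right_of_le ht0
    ((fE_cont hu).continuousOn) (fun s hs => ?_)
    ((continuous_const.mul (gE_cont hu)).intervalIntegrable _ _)).symm
  have hsI : s ∈ Set.Ioo (0:ℝ) T := ⟨hs.1, lt_of_lt_of_le hs.2 htT⟩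
  have : HasDerivAt (fE D u) (-2 * gE D u s) s := by
    rw [← energy_identity sol hsI]
    exact fE_hasDeriv hu s
  exact this.hasDerivWithinAt

lemma fE_decay {t : ℝ} (ht0 : 0 ≤ t) (htT : t ≤ T) : fE D u t ≤ fE D u 0 := by
  have hu := sol.smooth_u
  have hftc := ftc_fE sol ht0 htT
  have hnn : 0 ≤ ∫ s in (0:ℝ)..t, gE D u s :=
    intervalIntegral.integral_nonneg ht0 fun s _ => gE_nonneg s
  rw [intervalIntegral.integral_const_mul] at hftc
  linarith

lemma gE_total (hT : 0 ≤ T) : 2 * ∫ s in (0:ℝ)..T, gE D u s ≤ fE D u 0 := by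
  have hftc := ftc_fE sol (t := T) hT le_rfl
  rw [intervalIntegral.integral_const_mul] at hftc
  have := fE_nonneg (D := D) (u := u) T
  linarith

lemma fE_total (hT : 0 ≤ T) : ∫ s in (0:ℝ)..T, fE D u s ≤ T * fE D u 0 := by
  have hu := sol.smooth_u
  calc ∫ s in (0:ℝ)..T, fE D u s ≤ ∫ s in (0:ℝ)..T, fE D u 0 := by
        refine intervalIntegral.integral_mono_on hT
          ((fE_cont hu).intervalIntegrable _ _) (intervalIntegrable_const)
          fun s hs => fE_decay sol hs.1 hs.2
  _ = T * fE D u 0 := by rw [intervalIntegral.integral_const, smul_eq_mul, sub_zero]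

lemma fE_zero (hΩ : ∀ x ∈ D.Ω, u 0 x = u₀ x) :
    fE D u 0 = ∫ x in D.Ω, (vort u₀ x) ^ 2 := by
  have hu := sol.smooth_u
  rw [fE]
  refine setIntegral_congr_fun D.isOpen.measurableSet fun x hx => ?_
  rw [← vort_eq hu 0 x]
  have hv : vort (u 0) x = vort u₀ x := by
    rw [vort, vort]
    congr 1
    · exact pd_congr_nhds (Filter.eventuallyEq_of_mem (D.isOpen.mem_nhds hx)
        fun y hy => by rw [hΩ y hy]) 0
    · exact pd_congr_nhds (Filter.eventuallyEq_of_mem (D.isOpen.mem_nhds hx)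
        fun y hy => by rw [hΩ y hy]) 1
  rw [hv]
end ftc

lemma abs_coord_le_norm (x : Pt) (j : Fin 2) : |x j| ≤ ‖x‖ := by
  rw [EuclideanSpace.norm_eq]
  rw [show |x j| = Real.sqrt (|x j| ^ 2) from by rw [sq_abs]; exact (Real.sqrt_sq_eq_abs _).symm]
  apply Real.sqrt_le_sqrt
  exact Finset.single_le_sum (f := fun i => |x i| ^ 2) (fun i _ => sq_nonneg _)
    (Finset.mem_univ j)

section hbound
variable {D : SmoothDomain2} {T : ℝ} {u₀ : Pt → Pt} {L : ℝ} {u : ℝ → Pt → Pt}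
  {p : ℝ → Pt → ℝ} {h : ℝ → ℝ} (sol : IsNSSol D T u₀ L u p h)
include sol

lemma h_sq_bound {R : ℝ} (hR : ∀ x ∈ D.Ω, ‖x‖ ≤ R) (hR0 : 0 ≤ R)
    {t : ℝ} (ht : t ∈ Set.Ioo (0:ℝ) T) :
    h t ^ 2 * (4 * (volume D.Ω).toReal ^ 2)
      ≤ (volume D.Ω).toReal * ((3 * (4 + R ^ 2)) * (fE D u t + gE D u t)) := by
  have hu := sol.smooth_u
  have hw : ContDiff ℝ (⊤ : ℕ∞) (vort (u t)) := vort_contDiff hu t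
  have hφc : Continuous (fun x : Pt => 2 * vort (u t) x
      + (x 0 * pd 0 (vort (u t)) x + x 1 * pd 1 (vort (u t)) x)) :=
    (continuous_const.mul hw.continuous).add
      (((coord_contDiff 0).continuous.mul (contDiff_pd hw 0).continuous).add
        ((coord_contDiff 1).continuous.mul (contDiff_pd hw 1).continuous))
  have hid := h_formula sol ht
  have hsq : (h t * (2 * (volume D.Ω).toReal)) ^ 2
      ≤ (volume D.Ω).toReal * ∫ x in D.Ω, (2 * vort (u t) x
        + (x 0 * pd 0 (vort (u t)) x + x 1 * pd 1 (vort (u t)) x)) ^ 2 := by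
    rw [hid]
    exact sq_setIntegral_le D.bounded hφc
  have hptw : ∀ x ∈ D.Ω, (2 * vort (u t) x
      + (x 0 * pd 0 (vort (u t)) x + x 1 * pd 1 (vort (u t)) x)) ^ 2
      ≤ (3 * (4 + R ^ 2)) * (vort (u t) x ^ 2
        + ((pd 0 (vort (u t)) x) ^ 2 + (pd 1 (vort (u t)) x) ^ 2)) := by
    intro x hx
    have h0 : |x 0| ≤ R := le_trans (abs_coord_le_norm x 0) (hR x hx)
    have h1 : |x 1| ≤ R := le_trans (abs_coord_le_norm x 1) (hR x hx)
    have h0sq : x 0 ^ 2 ≤ R ^ 2 := by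
      rw [← sq_abs]; exact pow_le_pow_left₀ (abs_nonneg _) h0 2
    have h1sq : x 1 ^ 2 ≤ R ^ 2 := by
      rw [← sq_abs]; exact pow_le_pow_left₀ (abs_nonneg _) h1 2
    nlinarith [sq_nonneg (2 * vort (u t) x - x 0 * pd 0 (vort (u t)) x),
      sq_nonneg (2 * vort (u t) x - x 1 * pd 1 (vort (u t)) x),
      sq_nonneg (x 0 * pd 0 (vort (u t)) x - x 1 * pd 1 (vort (u t)) x),
      mul_nonneg (sub_nonneg.2 h0sq) (sq_nonneg (pd 0 (vort (u t)) x)),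
      mul_nonneg (sub_nonneg.2 h1sq) (sq_nonneg (pd 1 (vort (u t)) x)),
      sq_nonneg (vort (u t) x)]
  have hmono : (∫ x in D.Ω, (2 * vort (u t) x
      + (x 0 * pd 0 (vort (u t)) x + x 1 * pd 1 (vort (u t)) x)) ^ 2)
      ≤ ∫ x in D.Ω, (3 * (4 + R ^ 2)) * (vort (u t) x ^ 2
        + ((pd 0 (vort (u t)) x) ^ 2 + (pd 1 (vort (u t)) x) ^ 2)) := by
    refine setIntegral_mono_on (integrableOn_of_continuous D.bounded (hφc.pow 2))
      (integrableOn_of_continuous D.bounded (continuous_const.mul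
        ((hw.continuous.pow 2).add (((contDiff_pd hw 0).continuous.pow 2).add
          ((contDiff_pd hw 1).continuous.pow 2)))))
      D.isOpen.measurableSet hptw
  have hsplit : (∫ x in D.Ω, (3 * (4 + R ^ 2)) * (vort (u t) x ^ 2
      + ((pd 0 (vort (u t)) x) ^ 2 + (pd 1 (vort (u t)) x) ^ 2)))
      = (3 * (4 + R ^ 2)) * (fE D u t + gE D u t) := by
    rw [integral_const_mul]
    congr 1
    rw [integral_add (f := fun x => vort (u t) x ^ 2)
      (g := fun x => (pd 0 (vort (u t)) x) ^ 2 + (pd 1 (vort (u t)) x) ^ 2)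
      (integrableOn_of_continuous D.bounded (hw.continuous.pow 2))
      (integrableOn_of_continuous D.bounded (((contDiff_pd hw 0).continuous.pow 2).add
        ((contDiff_pd hw 1).continuous.pow 2)))]
    congr 1
    · rw [fE]
      exact setIntegral_congr_fun D.isOpen.measurableSet fun x _ => by
        rw [vort_eq hu t x]
    · rw [gE]
      exact setIntegral_congr_fun D.isOpen.measurableSet fun x _ => by
        rw [pd_vort hu t x 0, pd_vort hu t x 1]
  calc h t ^ 2 * (4 * (volume D.Ω).toReal ^ 2)
      = (h t * (2 * (volume D.Ω).toReal)) ^ 2 := by ring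
    _ ≤ (volume D.Ω).toReal * ∫ x in D.Ω, (2 * vort (u t) x
        + (x 0 * pd 0 (vort (u t)) x + x 1 * pd 1 (vort (u t)) x)) ^ 2 := hsq
    _ ≤ (volume D.Ω).toReal * ((3 * (4 + R ^ 2)) * (fE D u t + gE D u t)) := by
        rw [← hsplit]
        exact mul_le_mul_of_nonneg_left hmono ENNReal.toReal_nonneg
end hbound

lemma rpow_half_max {T : ℝ} (hT : 0 < T) :
    (max T 1 : ℝ) ^ (1/2:ℝ) = max (Real.sqrt T) 1 := by
  rcases le_total T 1 with hle | hle
  · rw [max_eq_right hle, Real.one_rpow,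
      max_eq_right (Real.sqrt_le_one.2 hle)]
  · rw [max_eq_left hle, ← Real.sqrt_eq_rpow]
    rw [max_eq_left]
    calc (1:ℝ) = Real.sqrt 1 := Real.sqrt_one.symm
    _ ≤ Real.sqrt T := Real.sqrt_le_sqrt hle

/-- There is a constant `C > 0` depending only on `Ω` such that for every
classical solution of the 2D Navier–Stokes system the (space-independent) boundary
vorticity satisfies `(∫₀ᵀ h(t)² dt)^{1/2} ≤ C max{√T, 1} ‖ω₀‖_{L²(Ω)}`. -/
theorem boundary_vorticity_L2_bound (D : SmoothDomain2) :
    ∃ C > (0:ℝ), ∀ (T : ℝ), 0 < T →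
      ∀ (u₀ : Pt → Pt) (L : ℝ) (u : ℝ → Pt → Pt) (p : ℝ → Pt → ℝ) (h : ℝ → ℝ),
      ContDiff ℝ (⊤ : ℕ∞) u₀ →
      (∀ x ∈ D.Ω, div2 u₀ x = 0) →
      (∀ x ∈ frontier D.Ω, (∑ j, u₀ x j * D.n x j) = 0) →
      IsNSSol D T u₀ L u p h →
      (∫ t in (0:ℝ)..T, h t ^ 2) ^ (1/2 : ℝ)
        ≤ C * max (Real.sqrt T) 1 * L2 D.Ω (vort u₀) := by
  obtain ⟨r, hr⟩ := D.bounded.subset_closedBall (0 : Pt)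
  set R := max r 0 with hRdef
  have hR0 : (0:ℝ) ≤ R := le_max_right r 0
  have hRb : ∀ x ∈ D.Ω, ‖x‖ ≤ R := fun x hx => by
    have h1 := hr hx
    rw [Metric.mem_closedBall, dist_zero_right] at h1
    exact h1.trans (le_max_left r 0)
  set vol := (volume D.Ω).toReal with hvoldef
  have hvol : 0 < vol := ENNReal.toReal_pos
    (D.isOpen.measure_pos volume D.nonempty).ne' D.bounded.measure_lt_top.ne
  set c₁ := (3 * (4 + R ^ 2)) / (4 * vol) with hc₁
  have hc₁pos : 0 < c₁ := by positivity
  refine ⟨((3/2) * c₁) ^ (1/2:ℝ), Real.rpow_pos_of_pos (by positivity) _, ?_⟩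
  intro T hT u₀ L u p h hu₀ hdiv₀ hslip₀ sol
  have hu := sol.smooth_u
  set V := ∫ x in D.Ω, (vort u₀ x) ^ 2 with hVdef
  have hf0 : fE D u 0 = V := fE_zero sol sol.init
  have hVnn : 0 ≤ V := by rw [← hf0]; exact fE_nonneg 0
  have hhb : ∀ t ∈ Set.Ioo (0:ℝ) T, h t ^ 2 ≤ c₁ * (fE D u t + gE D u t) := by
    intro t ht
    have hb := h_sq_bound sol hRb hR0 ht
    have hS : 0 ≤ fE D u t + gE D u t := add_nonneg (fE_nonneg t) (gE_nonneg t)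
    rw [hc₁, div_mul_eq_mul_div, le_div_iff₀ (by positivity)]
    nlinarith [hb, hvol, sq_nonneg (h t)]
  have intH : IntervalIntegrable (fun t => h t ^ 2) volume 0 T :=
    ((sol.smooth_h.continuous).pow 2).intervalIntegrable _ _
  have intS : IntervalIntegrable (fun t => c₁ * (fE D u t + gE D u t)) volume 0 T :=
    (continuous_const.mul ((fE_cont hu).add (gE_cont hu))).intervalIntegrable _ _
  have hae : (fun t => h t ^ 2)
      ≤ᵐ[volume.restrict (Set.Icc (0:ℝ) T)] fun t => c₁ * (fE D u t + gE D u t) := by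
    rw [← Measure.restrict_congr_set Ioo_ae_eq_Icc]
    filter_upwards [ae_restrict_mem measurableSet_Ioo] with t ht using hhb t ht
  have step1 : ∫ t in (0:ℝ)..T, h t ^ 2
      ≤ ∫ t in (0:ℝ)..T, c₁ * (fE D u t + gE D u t) :=
    intervalIntegral.integral_mono_ae_restrict hT.le intH intS hae
  have step2 : (∫ t in (0:ℝ)..T, c₁ * (fE D u t + gE D u t))
      = c₁ * ((∫ t in (0:ℝ)..T, fE D u t) + ∫ t in (0:ℝ)..T, gE D u t) := by
    rw [← intervalIntegral.integral_add ((fE_cont hu).intervalIntegrable _ _)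
      ((gE_cont hu).intervalIntegrable _ _), intervalIntegral.integral_const_mul]
  have hTf := fE_total sol hT.le
  have hTg := gE_total sol hT.le
  rw [hf0] at hTf hTg
  have hM : T ≤ max T 1 := le_max_left T 1
  have h1M : (1:ℝ) ≤ max T 1 := le_max_right T 1
  have main : ∫ t in (0:ℝ)..T, h t ^ 2 ≤ (3/2 * c₁) * (max T 1 * V) := by
    have h3 : T * V + V / 2 ≤ 3/2 * (max T 1 * V) := by
      nlinarith [mul_le_mul_of_nonneg_right hM hVnn, mul_le_mul_of_nonneg_right h1M hVnn]
    have h4 : (∫ t in (0:ℝ)..T, fE D u t) + (∫ t in (0:ℝ)..T, gE D u t)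
        ≤ T * V + V / 2 := by linarith
    calc ∫ t in (0:ℝ)..T, h t ^ 2
        ≤ c₁ * ((∫ t in (0:ℝ)..T, fE D u t) + ∫ t in (0:ℝ)..T, gE D u t) :=
          step1.trans (le_of_eq step2)
      _ ≤ c₁ * (T * V + V / 2) := mul_le_mul_of_nonneg_left h4 hc₁pos.le
      _ ≤ c₁ * (3/2 * (max T 1 * V)) := mul_le_mul_of_nonneg_left h3 hc₁pos.le
      _ = (3/2 * c₁) * (max T 1 * V) := by ring
  have hLHSnn : 0 ≤ ∫ t in (0:ℝ)..T, h t ^ 2 :=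
    intervalIntegral.integral_nonneg hT.le fun t _ => sq_nonneg _
  have hr1 := Real.rpow_le_rpow hLHSnn main (by norm_num : (0:ℝ) ≤ 1/2)
  have hmaxpos : (0:ℝ) < max T 1 := lt_of_lt_of_le one_pos h1M
  have hexp : ((3/2 * c₁) * (max T 1 * V)) ^ (1/2:ℝ)
      = (3/2 * c₁) ^ (1/2:ℝ) * ((max T 1) ^ (1/2:ℝ) * V ^ (1/2:ℝ)) := by
    rw [Real.mul_rpow (by positivity) (by positivity),
      Real.mul_rpow hmaxpos.le hVnn]
  rw [hexp, rpow_half_max hT] at hr1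
  have hL2 : L2 D.Ω (vort u₀) = V ^ (1/2:ℝ) := by rw [L2, hVdef]
  rw [hL2]
  calc (∫ t in (0:ℝ)..T, h t ^ 2) ^ (1/2:ℝ)
      ≤ (3/2 * c₁) ^ (1/2:ℝ) * (max (Real.sqrt T) 1 * V ^ (1/2:ℝ)) := hr1
    _ = (3/2 * c₁) ^ (1/2:ℝ) * max (Real.sqrt T) 1 * V ^ (1/2:ℝ) := by ring
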